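/- For every twice continuously differentiable matrix field A : ℝ³ → so(3) taking values in the skew-symmetric 3×3 matrices, Curl((Curl A)ᵀ) = −anti(∇(div(axl A))) at every point, i.e. Curl((Curl A)ᵀ) is the skew-symmetric matrix whose axial vector is minus the gradient of the divergence of axl A. -/

import Mathlib

open Matrix

/-- Partial derivative in direction `j` of a scalar field on `ℝ³`. -/
noncomputable def pd (j : Fin 3) (f : (Fin 3 → ℝ) → ℝ) (x : Fin 3 → ℝ) : ℝ :=
  fderiv ℝ f x (Pi.single j 1)

/-- Gradient of a scalar field on `ℝ³`. -/
noncomputable def grad3 (f : (Fin 3 → ℝ) → ℝ) (x : Fin 3 → ℝ) : Fin 3 → ℝ :=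
  fun i => pd i f x

/-- Classical curl of a vector field on `ℝ³`. -/
noncomputable def vcurl (v : (Fin 3 → ℝ) → Fin 3 → ℝ) (x : Fin 3 → ℝ) : Fin 3 → ℝ :=
  ![pd 1 (fun y => v y 2) x - pd 2 (fun y => v y 1) x,
    pd 2 (fun y => v y 0) x - pd 0 (fun y => v y 2) x,
    pd 0 (fun y => v y 1) x - pd 1 (fun y => v y 0) x]

/-- Divergence of a vector field on `ℝ³`. -/
noncomputable def vdiv (v : (Fin 3 → ℝ) → Fin 3 → ℝ) (x : Fin 3 → ℝ) : ℝ :=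
  ∑ i, pd i (fun y => v y i) x

/-- Row-wise Curl of a matrix field on `ℝ³`: the `i`-th row of `mCurl P`
is the curl of the `i`-th row of `P`. -/
noncomputable def mCurl (P : (Fin 3 → ℝ) → Matrix (Fin 3) (Fin 3) ℝ) (x : Fin 3 → ℝ) :
    Matrix (Fin 3) (Fin 3) ℝ :=
  Matrix.of fun i j => vcurl (fun y => P y i) x j

/-- Jacobian matrix of a vector field on `ℝ³`. -/
noncomputable def jac (v : (Fin 3 → ℝ) → Fin 3 → ℝ) (x : Fin 3 → ℝ) :
    Matrix (Fin 3) (Fin 3) ℝ :=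
  Matrix.of fun i j => pd j (fun y => v y i) x

/-- Axial vector of a (skew-symmetric) `3 × 3` matrix: with `A 1 2 = -a₁`,
`A 2 0 = -a₂`, `A 0 1 = -a₃` (so `A 2 1 = a₁`, `A 0 2 = a₂`, `A 1 0 = a₃`). -/
def axl (A : Matrix (Fin 3) (Fin 3) ℝ) : Fin 3 → ℝ :=
  ![A 2 1, A 0 2, A 1 0]

/-- The skew-symmetric matrix `anti a` characterized by `(anti a) ⬝ v = a × v`. -/
def antiM (a : Fin 3 → ℝ) : Matrix (Fin 3) (Fin 3) ℝ :=
  !![0, -a 2, a 1; a 2, 0, -a 0; -a 1, a 0, 0]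

/-- Symmetric part of a matrix. -/
noncomputable def symM (X : Matrix (Fin 3) (Fin 3) ℝ) : Matrix (Fin 3) (Fin 3) ℝ :=
  (1 / 2 : ℝ) • (X + Xᵀ)

/-- Skew-symmetric part of a matrix. -/
noncomputable def skewM (X : Matrix (Fin 3) (Fin 3) ℝ) : Matrix (Fin 3) (Fin 3) ℝ :=
  (1 / 2 : ℝ) • (X - Xᵀ)

/-- Deviatoric (trace-free) part of a matrix. -/
noncomputable def devM (X : Matrix (Fin 3) (Fin 3) ℝ) : Matrix (Fin 3) (Fin 3) ℝ :=
  X - (Matrix.trace X / 3) • (1 : Matrix (Fin 3) (Fin 3) ℝ)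

/-- Frobenius inner product `⟨X, Y⟩ = tr (X Yᵀ)`. -/
noncomputable def minner (X Y : Matrix (Fin 3) (Fin 3) ℝ) : ℝ :=
  Matrix.trace (X * Yᵀ)

/-- Squared Frobenius norm. -/
noncomputable def mnormSq (X : Matrix (Fin 3) (Fin 3) ℝ) : ℝ :=
  minner X X

/-- Squared Euclidean norm of a vector in `ℝ³`. -/
def vnormSq (v : Fin 3 → ℝ) : ℝ :=
  ∑ i, (v i) ^ 2

/-! Writing `A = anti a` with `a = axl A`, the identity `Curl (anti a) = (div a) 1 - (D a)ᵀ` gives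
`(Curl A)ᵀ = (div a) 1 - D a`. The rows of `D a` are gradients, so `Curl (D a) = 0` by the symmetry
of second derivatives, while `Curl ((div a) 1) = -anti (∇ div a)`. -/

lemma contDiff_pd {n m : WithTop ℕ∞} {f : (Fin 3 → ℝ) → ℝ} (hf : ContDiff ℝ n f)
    (hmn : m + 1 ≤ n) (k : Fin 3) : ContDiff ℝ m (pd k f) :=
  (hf.fderiv_right hmn).clm_apply contDiff_const

lemma differentiable_pd {f : (Fin 3 → ℝ) → ℝ} (hf : ContDiff ℝ 2 f) (k : Fin 3) :
    Differentiable ℝ (pd k f) :=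
  (contDiff_pd hf le_rfl k).differentiable one_ne_zero

lemma pd_pd_comm {f : (Fin 3 → ℝ) → ℝ} (hf : ContDiff ℝ 2 f) (i j : Fin 3) (x : Fin 3 → ℝ) :
    pd i (pd j f) x = pd j (pd i f) x := by
  have hf' : Differentiable ℝ (fderiv ℝ f) := (hf.fderiv_right le_rfl).differentiable one_ne_zero
  have hpd : ∀ k l, pd k (pd l f) x = fderiv ℝ (fderiv ℝ f) x (Pi.single k 1) (Pi.single l 1) :=
    fun k l => by
      change fderiv ℝ (fun y => fderiv ℝ f y (Pi.single l 1)) x (Pi.single k 1) = _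
      simp [fderiv_clm_apply (hf' x) (differentiableAt_const _)]
  rw [hpd, hpd]
  exact hf.contDiffAt.isSymmSndFDerivAt (by simp) _ _

lemma pd_neg (f : (Fin 3 → ℝ) → ℝ) (j : Fin 3) (x : Fin 3 → ℝ) :
    pd j (fun y => -f y) x = -pd j f x := by
  simp [pd]

lemma pd_sub {f g : (Fin 3 → ℝ) → ℝ} {x : Fin 3 → ℝ} (hf : DifferentiableAt ℝ f x)
    (hg : DifferentiableAt ℝ g x) (j : Fin 3) :
    pd j (fun y => f y - g y) x = pd j f x - pd j g x := by
  simp [pd, fderiv_fun_sub hf hg]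

lemma pd_const (c : ℝ) (j : Fin 3) (x : Fin 3 → ℝ) : pd j (fun _ => c) x = 0 := by
  simp [pd]

lemma vcurl_sub {u v : (Fin 3 → ℝ) → Fin 3 → ℝ} {x : Fin 3 → ℝ}
    (hu : ∀ i, DifferentiableAt ℝ (fun y => u y i) x)
    (hv : ∀ i, DifferentiableAt ℝ (fun y => v y i) x) :
    vcurl (fun y => u y - v y) x = vcurl u x - vcurl v x := by
  ext k
  fin_cases k <;> simp [vcurl, pd_sub (hu _) (hv _)] <;> ring

lemma vcurl_grad3 {f : (Fin 3 → ℝ) → ℝ} (hf : ContDiff ℝ 2 f) (x : Fin 3 → ℝ) :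
    vcurl (grad3 f) x = 0 := by
  ext k
  fin_cases k <;> simp [vcurl, grad3, pd_pd_comm hf]

lemma mCurl_sub {P Q : (Fin 3 → ℝ) → Matrix (Fin 3) (Fin 3) ℝ} {x : Fin 3 → ℝ}
    (hP : ∀ i j, DifferentiableAt ℝ (fun y => P y i j) x)
    (hQ : ∀ i j, DifferentiableAt ℝ (fun y => Q y i j) x) :
    mCurl (fun y => P y - Q y) x = mCurl P x - mCurl Q x := by
  ext i j
  exact congrFun (vcurl_sub (hP i) (hQ i)) j

lemma mCurl_jac {a : (Fin 3 → ℝ) → Fin 3 → ℝ} (ha : ∀ i, ContDiff ℝ 2 (fun y => a y i))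
    (x : Fin 3 → ℝ) : mCurl (jac a) x = 0 := by
  ext i j
  exact congrFun (vcurl_grad3 (ha i) x) j

lemma mCurl_smul_one (φ : (Fin 3 → ℝ) → ℝ) (x : Fin 3 → ℝ) :
    mCurl (fun y => φ y • (1 : Matrix (Fin 3) (Fin 3) ℝ)) x = -antiM (grad3 φ x) := by
  ext i j
  fin_cases i <;> fin_cases j <;> simp [mCurl, vcurl, grad3, antiM, pd_const]

lemma mCurl_antiM (a : (Fin 3 → ℝ) → Fin 3 → ℝ) (x : Fin 3 → ℝ) :
    mCurl (fun y => antiM (a y)) x = vdiv a x • 1 - (jac a x)ᵀ := by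
  ext i j
  fin_cases i <;> fin_cases j <;>
    simp [mCurl, vcurl, vdiv, jac, antiM, Fin.sum_univ_three, pd_neg, pd_const] <;> ring

lemma antiM_axl {X : Matrix (Fin 3) (Fin 3) ℝ} (hX : Xᵀ = -X) : antiM (axl X) = X := by
  have h : ∀ i j, X j i = -X i j := fun i j => congrFun (congrFun hX i) j
  ext i j
  fin_cases i <;> fin_cases j <;> simp [antiM, axl] <;>
    linarith [h 0 0, h 1 1, h 2 2, h 0 1, h 0 2, h 1 2]

/-- For a skew-symmetric matrix field A,
Curl((Curl A)ᵀ) = −anti(∇(div(axl A))). -/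
theorem curl_curl_transpose_skew_eq
    (A : (Fin 3 → ℝ) → Matrix (Fin 3) (Fin 3) ℝ)
    (hA_skew : ∀ x, (A x)ᵀ = -(A x))
    (hA_diff : ∀ i j, ContDiff ℝ 2 (fun y => A y i j)) :
    ∀ x : Fin 3 → ℝ,
      mCurl (fun y => (mCurl A y)ᵀ) x =
        -antiM (grad3 (fun y => vdiv (fun z => axl (A z)) y) x) := by
  intro x
  set a := fun y => axl (A y)
  have ha : ∀ i, ContDiff ℝ 2 (fun y => a y i) := by
    intro i; fin_cases i <;> exact hA_diff _ _
  have hCurlA : (fun y => (mCurl A y)ᵀ) = fun y => vdiv a y • 1 - jac a y := by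
    have hA : A = fun y => antiM (a y) := funext fun y => (antiM_axl (hA_skew y)).symm
    funext y
    rw [hA, mCurl_antiM, transpose_sub, transpose_transpose, transpose_smul, transpose_one]
  have hdiv : Differentiable ℝ (vdiv a) := by
    unfold vdiv
    exact Differentiable.fun_sum fun i _ => differentiable_pd (ha i) i
  rw [hCurlA, mCurl_sub, mCurl_smul_one, mCurl_jac ha, sub_zero]
  · intro i j; simpa [Matrix.smul_apply] using (hdiv x).mul_const _
  · intro i j; exact differentiable_pd (ha i) j x
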